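/- arXiv:1905.03713 — 2 statements merged into one kernel-verified Lean document; each statement's English description precedes it below -/
import Mathlib

section
/- Fix θ ∈ ℝ. For every triple x, y, z ∈ ℂ³ that is orthonormal with respect to the real inner product g, one has |Re(e^{−iθ}·Υ₀(x,y,z))| ≤ 1. (Comass-one property of the phase-θ special Lagrangian form, Proposition 2.1.) -/
/-! Hadamard's inequality in `ℂ³` already gives the bound: `Υ₀(x,y,z) = h(x̄, y × z)`, so by
Cauchy–Schwarz and the Lagrange identity `|y × z|² = |y|²|z|² − |h(y,z)|²` we get
`|Υ₀(x,y,z)| ≤ |x| |y| |z|`, and the unit factor `e^{−iθ}` does not change the modulus. -/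

noncomputable section

open Complex

/-- `ℂ³`, identified with `ℝ⁶` via `(x₁,…,x₆) ↦ (x₁+i x₄, x₂+i x₅, x₃+i x₆)`. -/
abbrev C3 : Type := Fin 3 → ℂ

/-- The standard Hermitian inner product `h(u,v) = Σᵢ conj(uᵢ)·vᵢ` on `ℂ³`. -/
def Hh (u v : C3) : ℂ := ∑ i, starRingEnd ℂ (u i) * v i

/-- The induced real inner product `g = Re h`. -/
def gR (u v : C3) : ℝ := (Hh u v).re

/-- The holomorphic volume form `Υ₀(u,v,w) = det [u v w]`. -/
def Ups (u v w : C3) : ℂ := Matrix.det (Matrix.of fun i j => ![u, v, w] j i)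

/-- The phase-`θ` form `Υ_θ = e^{−iθ}·Υ₀`. -/
def UpsPh (θ : ℝ) (u v w : C3) : ℂ := Complex.exp (-(θ : ℂ) * Complex.I) * Ups u v w

open Matrix

lemma star_cross {R : Type*} [CommRing R] [StarRing R] (u v : Fin 3 → R) :
    star (u ⨯₃ v) = star u ⨯₃ star v := by
  ext i
  fin_cases i <;> simp [cross_apply, mul_comm]

lemma Hh_eq_star_dotProduct (u v : C3) : Hh u v = star u ⬝ᵥ v := rfl

lemma Hh_eq_inner (u v : C3) : Hh u v = inner ℂ (WithLp.toLp 2 u) (WithLp.toLp 2 v) := by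
  simp [Hh, PiLp.inner_apply, mul_comm]

lemma Hh_symm (u v : C3) : Hh v u = starRingEnd ℂ (Hh u v) := by
  simp only [Hh_eq_inner, inner_conj_symm]

lemma Hh_self_eq_ofReal_gR (u : C3) : Hh u u = (gR u u : ℂ) := by
  rw [gR, Hh_eq_inner]
  exact (inner_self_ofReal_re _).symm

lemma gR_self_eq_norm_sq (u : C3) : gR u u = ‖WithLp.toLp 2 u‖ ^ 2 := by
  rw [gR, Hh_eq_inner, ← inner_self_eq_norm_sq (𝕜 := ℂ)]
  rfl

lemma gR_self_nonneg (u : C3) : 0 ≤ gR u u := by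
  rw [gR_self_eq_norm_sq]
  positivity

lemma gR_star_self (u : C3) : gR (star u) (star u) = gR u u := by
  simp [gR, Hh]

lemma norm_Hh_sq_le (u v : C3) : ‖Hh u v‖ ^ 2 ≤ gR u u * gR v v := by
  rw [Hh_eq_inner, gR_self_eq_norm_sq, gR_self_eq_norm_sq, ← mul_pow]
  gcongr
  exact norm_inner_le_norm _ _

lemma Hh_cross_self (u v : C3) :
    Hh (u ⨯₃ v) (u ⨯₃ v) = Hh u u * Hh v v - Hh u v * Hh v u := by
  simp only [Hh_eq_star_dotProduct, star_cross, cross_dot_cross]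

lemma gR_cross_self_le (u v : C3) : gR (u ⨯₃ v) (u ⨯₃ v) ≤ gR u u * gR v v := by
  rw [gR, Hh_cross_self, Hh_symm u v, Complex.mul_conj, Hh_self_eq_ofReal_gR u,
    Hh_self_eq_ofReal_gR v, ← Complex.ofReal_mul, ← Complex.ofReal_sub, Complex.ofReal_re]
  linarith [Complex.normSq_nonneg (Hh u v)]

lemma Ups_eq_Hh_star_cross (u v w : C3) : Ups u v w = Hh (star u) (v ⨯₃ w) := by
  rw [Hh_eq_star_dotProduct, star_star, triple_product_eq_det, Ups, ← det_transpose]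
  rfl

lemma norm_Ups_sq_le (u v w : C3) : ‖Ups u v w‖ ^ 2 ≤ gR u u * gR v v * gR w w := by
  rw [Ups_eq_Hh_star_cross, mul_assoc, ← gR_star_self u]
  calc ‖Hh (star u) (v ⨯₃ w)‖ ^ 2 ≤ gR (star u) (star u) * gR (v ⨯₃ w) (v ⨯₃ w) :=
        norm_Hh_sq_le _ _
    _ ≤ gR (star u) (star u) * (gR v v * gR w w) :=
        mul_le_mul_of_nonneg_left (gR_cross_self_le v w) (gR_self_nonneg _)

lemma norm_UpsPh (θ : ℝ) (u v w : C3) : ‖UpsPh θ u v w‖ = ‖Ups u v w‖ := by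
  rw [UpsPh, norm_mul, ← Complex.ofReal_neg, Complex.norm_exp_ofReal_mul_I, one_mul]

theorem comass_one_general (θ : ℝ) (x y z : C3)
    (hx : gR x x = 1) (hy : gR y y = 1) (hz : gR z z = 1) :
    |(UpsPh θ x y z).re| ≤ 1 := by
  have hUps : ‖Ups x y z‖ ^ 2 ≤ 1 := by simpa [hx, hy, hz] using norm_Ups_sq_le x y z
  calc |(UpsPh θ x y z).re| ≤ ‖UpsPh θ x y z‖ := Complex.abs_re_le_norm _
    _ = ‖Ups x y z‖ := norm_UpsPh θ x y z
    _ ≤ 1 := (pow_le_one_iff_of_nonneg (norm_nonneg _) two_ne_zero).mp hUps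

/-- **Proposition 2.1** (Harvey–Lawson): the phase-`θ` special Lagrangian form
`Re(Υ_θ)` has comass one: `|Re(e^{−iθ}·Υ₀(x,y,z))| ≤ 1` for every `g`-orthonormal
triple `x, y, z` in `ℂ³`. -/
theorem comass_one (θ : ℝ) (x y z : C3)
    (hx : gR x x = 1) (hy : gR y y = 1) (hz : gR z z = 1)
    (hxy : gR x y = 0) (hxz : gR x z = 0) (hyz : gR y z = 0) :
    |(UpsPh θ x y z).re| ≤ 1 :=
  comass_one_general θ x y z hx hy hz
end
end

section
/- Fix θ ∈ ℝ. For any two 3-dimensional real subspaces E, F ⊆ ℂ³ that are special Lagrangian of phase θ, there exists a matrix A in the special unitary group SU(3) such that the image of E under the ℝ-linear map u ↦ A·u equals F. (Transitivity part of Proposition 2.3.) -/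
/-!
On a Lagrangian plane `E` the Hermitian form `h` is real, so an orthonormal basis of `E` for
`g = Re h` is a unitary basis of `ℂ³`: as columns it gives `U ∈ U(3)` with `E = U·ℝ³`.
The special condition makes `e^{−iθ} det U` real of modulus one, hence `±1`, and replacing `U`
by `−U` if necessary gives `det U = e^{iθ}`. For `E = U·ℝ³` and `F = W·ℝ³` obtained this way,
`W U*` lies in `SU(3)` and maps `E` onto `F`.
-/

noncomputable section

open Complex

/-- The standard symplectic form `Ω₀ = Im h`. -/
def Om (u v : C3) : ℝ := (Hh u v).im

/-- `E` is a special Lagrangian 3-plane of phase `θ`: a 3-dimensional real subspace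
on which `Ω₀` and `Im Υ_θ` vanish. -/
def IsSpecialLagrangian (θ : ℝ) (E : Submodule ℝ C3) : Prop :=
  Module.finrank ℝ E = 3 ∧ (∀ u ∈ E, ∀ v ∈ E, Om u v = 0) ∧
    ∀ u ∈ E, ∀ v ∈ E, ∀ w ∈ E, (UpsPh θ u v w).im = 0

open Module Matrix

theorem Submodule.exists_orthonormalBasis_span_eq_of_isotropic {V : Type*}
    [NormedAddCommGroup V] [InnerProductSpace ℂ V] [FiniteDimensional ℂ V] {n : ℕ}
    (hV : finrank ℂ V = n) (E : Submodule ℝ V) (hE : finrank ℝ E = n)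
    (hiso : ∀ u ∈ E, ∀ v ∈ E, (inner ℂ u v).im = 0) :
    ∃ b : OrthonormalBasis (Fin n) ℂ V, Submodule.span ℝ (Set.range b) = E := by
  let _ := InnerProductSpace.complexToReal (G := V)
  let b₀ : OrthonormalBasis (Fin n) ℝ E := (stdOrthonormalBasis ℝ E).reindex (finCongr hE)
  have hon : Orthonormal ℂ fun i => (b₀ i : V) := by
    refine orthonormal_iff_ite.mpr fun i j => Complex.ext ?_ ?_
    · have h := real_inner_eq_re_inner ℂ (b₀ i : V) (b₀ j)
      rw [← Submodule.coe_inner, orthonormal_iff_ite.mp b₀.orthonormal] at h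
      simp only [RCLike.re_to_complex] at h
      rw [← h]; split_ifs <;> simp
    · rw [hiso _ (b₀ i).2 _ (b₀ j).2]
      split_ifs <;> simp
  let b : OrthonormalBasis (Fin n) ℂ V :=
    OrthonormalBasis.mk hon (hon.linearIndependent.span_eq_top_of_card_eq_finrank'
      (by simp [hV])).ge
  refine ⟨b, ?_⟩
  rw [OrthonormalBasis.coe_mk, Set.range_comp', ← E.coe_subtype, Submodule.span_image,
    ← b₀.coe_toBasis, b₀.toBasis.span_eq, Submodule.map_top, Submodule.range_subtype]

theorem Submodule.exists_unitary_span_range_col_eq_of_isotropic {n : ℕ}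
    (E : Submodule ℝ (Fin n → ℂ)) (hE : finrank ℝ E = n)
    (hiso : ∀ u ∈ E, ∀ v ∈ E, (star u ⬝ᵥ v).im = 0) :
    ∃ U ∈ unitaryGroup (Fin n) ℂ, Submodule.span ℝ (Set.range U.col) = E := by
  let e : EuclideanSpace ℂ (Fin n) ≃ₗ[ℝ] (Fin n → ℂ) :=
    (WithLp.linearEquiv 2 ℂ (Fin n → ℂ)).restrictScalars ℝ
  obtain ⟨b, hb⟩ := (E.map e.symm.toLinearMap).exists_orthonormalBasis_span_eq_of_isotropic
    finrank_euclideanSpace_fin (by rwa [LinearEquiv.finrank_map_eq]) (by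
      rintro _ ⟨u, hu, rfl⟩ _ ⟨v, hv, rfl⟩
      rw [← hiso u hu v hv]
      exact congrArg Complex.im (dotProduct_comm _ _))
  refine ⟨(EuclideanSpace.basisFun (Fin n) ℂ).toBasis.toMatrix b,
    (EuclideanSpace.basisFun (Fin n) ℂ).toMatrix_orthonormalBasis_mem_unitary b, ?_⟩
  have hcol : ((EuclideanSpace.basisFun (Fin n) ℂ).toBasis.toMatrix b).col = e ∘ b := rfl
  rw [hcol, Set.range_comp, ← e.coe_coe, ← Submodule.map_span, hb]
  exact (Submodule.map_symm_eq_iff e).mp rfl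

theorem Matrix.map_mulVecLin_span_range_col {R S m n p : Type*} [CommSemiring R] [CommSemiring S]
    [Algebra R S] [Fintype n] (A : Matrix m n S) (U : Matrix n p S) :
    Submodule.map ((mulVecLin A).restrictScalars R) (Submodule.span R (Set.range U.col)) =
      Submodule.span R (Set.range (A * U).col) := by
  rw [Submodule.map_span, ← Set.range_comp]
  rfl

theorem Complex.eq_exp_or_eq_neg_exp_of_im_eq_zero {θ : ℝ} {z : ℂ} (hz : ‖z‖ = 1)
    (h : (exp (-θ * I) * z).im = 0) : z = exp (θ * I) ∨ z = -exp (θ * I) := by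
  set w := exp (-θ * I) * z with hw
  have hzw : z = exp (θ * I) * w := by rw [hw, ← mul_assoc, ← exp_add]; simp
  have hw_real : w = (w.re : ℂ) := Complex.ext (by simp) (by simp [h])
  have hw_norm : |w.re| = 1 := by
    rw [abs_re_eq_norm.mpr h, hw, norm_mul, ← ofReal_neg, norm_exp_ofReal_mul_I, one_mul, hz]
  rcases (abs_eq zero_le_one).mp hw_norm with h1 | h1
  · left; rw [hzw, hw_real, h1]; simp
  · right; rw [hzw, hw_real, h1]; simp

theorem Ups_col_eq_det (U : Matrix (Fin 3) (Fin 3) ℂ) :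
    Ups (U.col 0) (U.col 1) (U.col 2) = U.det := by
  unfold Ups
  congr 1
  ext i j
  fin_cases j <;> rfl

theorem IsSpecialLagrangian.exists_unitary_span_range_col {θ : ℝ} {E : Submodule ℝ C3}
    (h : IsSpecialLagrangian θ E) :
    ∃ U ∈ unitaryGroup (Fin 3) ℂ,
      U.det = exp (θ * I) ∧ Submodule.span ℝ (Set.range U.col) = E := by
  obtain ⟨hdim, hlag, hphase⟩ := h
  obtain ⟨U, hU, rfl⟩ := E.exists_unitary_span_range_col_eq_of_isotropic hdim hlag
  have hcol (j : Fin 3) : U.col j ∈ Submodule.span ℝ (Set.range U.col) :=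
    Submodule.subset_span ⟨j, rfl⟩
  have hdet := hphase _ (hcol 0) _ (hcol 1) _ (hcol 2)
  rw [UpsPh, Ups_col_eq_det] at hdet
  rcases Complex.eq_exp_or_eq_neg_exp_of_im_eq_zero
    (CStarRing.norm_of_mem_unitary (det_of_mem_unitary hU)) hdet with hdet | hdet
  · exact ⟨U, hU, hdet, rfl⟩
  -- In odd dimension `-U` has determinant `-det U` and columns with the same real span.
  · refine ⟨-U, by simpa [mem_unitaryGroup_iff, star_neg] using hU, ?_, ?_⟩
    · rw [det_neg, hdet, Fintype.card_fin]; ring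
    · rw [show (-U).col = Neg.neg ∘ U.col from rfl, Set.range_comp, Set.image_neg_eq_neg,
        Submodule.span_neg]

/-- **Proposition 2.3, transitivity**: `SU(3)` acts transitively on the set of special
Lagrangian 3-planes of a fixed phase `θ`. -/
theorem su3_transitive_on_special_lagrangians (θ : ℝ) (E F : Submodule ℝ C3)
    (hE : IsSpecialLagrangian θ E) (hF : IsSpecialLagrangian θ F) :
    ∃ A ∈ Matrix.specialUnitaryGroup (Fin 3) ℂ,
      Submodule.map ((Matrix.mulVecLin A).restrictScalars ℝ) E = F := by
  obtain ⟨U, hU, hUdet, rfl⟩ := hE.exists_unitary_span_range_col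
  obtain ⟨W, hW, hWdet, rfl⟩ := hF.exists_unitary_span_range_col
  refine ⟨W * star U,
    mem_specialUnitaryGroup_iff.mpr ⟨mul_mem hW (Unitary.star_mem hU), ?_⟩, ?_⟩
  · rw [det_mul, star_eq_conjTranspose, det_conjTranspose, hWdet, ← hUdet]
    exact (det_of_mem_unitary hU).2
  · rw [map_mulVecLin_span_range_col, mul_assoc, mem_unitaryGroup_iff'.mp hU, mul_one]
end
end
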